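/- arXiv:1708.09549 — 3 statements merged into one kernel-verified Lean document; each statement's English description precedes it below -/
import Mathlib

section
/- Let 1 < p₁, p₂ < ∞ with 1/p = 1/p₁ + 1/p₂ and ω ∈ A₁. If the maximal linear commutator 𝓜_{Σb⃗} with b⃗ = (b,b) is bounded from L^{p₁}(ω) × L^{p₂}(ω) to L^{p}(ω^{1-p}) with operator norm K, then for every cube Q, (1/ω(Q)) ∫_Q |b(x) - b_Q| dx ≤ C·K for a constant C independent of Q; that is, b ∈ BMO(ω). -/
open MeasureTheory ENNReal NNReal

noncomputable section

abbrev Rn (n : ℕ) := Fin n → ℝ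

variable {n : ℕ}

/-- A cube in ℝⁿ: a closed ball in the sup norm, with center `c` and half side-length `r`. -/
def Cube (c : Rn n) (r : ℝ) : Set (Rn n) := Metric.closedBall c r

/-- Average of an `ℝ≥0∞`-valued function over a cube. -/
def cubeAvgE (g : Rn n → ℝ≥0∞) (c : Rn n) (r : ℝ) : ℝ≥0∞ :=
  (∫⁻ y in Cube c r, g y) / volume (Cube c r)

/-- Average of a real-valued function over a cube. -/
def cubeAvg (f : Rn n → ℝ) (c : Rn n) (r : ℝ) : ℝ :=
  (∫ y in Cube c r, f y) / (volume (Cube c r)).toReal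

/-- ω-measure of a cube. -/
def wVol (ω : Rn n → ℝ) (c : Rn n) (r : ℝ) : ℝ≥0∞ :=
  ∫⁻ y in Cube c r, ENNReal.ofReal (ω y)

/-- The bilinear Hardy–Littlewood maximal function 𝓜. -/
def biM (f₁ f₂ : Rn n → ℝ) (x : Rn n) : ℝ≥0∞ :=
  ⨆ (c : Rn n) (r : ℝ) (_ : 0 < r) (_ : x ∈ Cube c r),
    cubeAvgE (fun y => ENNReal.ofReal |f₁ y|) c r *
      cubeAvgE (fun y => ENNReal.ofReal |f₂ y|) c r

/-- The local maximal function M_{Q₀}, over subcubes of Q₀ = Cube c₀ r₀ containing x. -/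
def locM (c₀ : Rn n) (r₀ : ℝ) (b : Rn n → ℝ) (x : Rn n) : ℝ≥0∞ :=
  ⨆ (c : Rn n) (r : ℝ) (_ : 0 < r) (_ : x ∈ Cube c r) (_ : Cube c r ⊆ Cube c₀ r₀),
    cubeAvgE (fun y => ENNReal.ofReal |b y|) c r

/-- Maximal function of an `ℝ≥0∞`-valued function. -/
def eM (g : Rn n → ℝ≥0∞) (x : Rn n) : ℝ≥0∞ :=
  ⨆ (c : Rn n) (r : ℝ) (_ : 0 < r) (_ : x ∈ Cube c r), cubeAvgE g c r

/-- The Hardy–Littlewood maximal function M. -/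
def HLM (f : Rn n → ℝ) : Rn n → ℝ≥0∞ := eM (fun y => ENNReal.ofReal |f y|)

/-- The weighted maximal function M_{ω,s} = (M_ω(|f|^s))^{1/s}. -/
def wM (s : ℝ) (ω f : Rn n → ℝ) (x : Rn n) : ℝ≥0∞ :=
  (⨆ (c : Rn n) (r : ℝ) (_ : 0 < r) (_ : x ∈ Cube c r),
    (∫⁻ y in Cube c r, ENNReal.ofReal |f y| ^ s * ENNReal.ofReal (ω y)) / wVol ω c r) ^ (1 / s)

/-- Weighted L^p norm of an `ℝ≥0∞`-valued function. -/
def wNormE (p : ℝ) (ω : Rn n → ℝ) (g : Rn n → ℝ≥0∞) : ℝ≥0∞ :=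
  (∫⁻ x, g x ^ p * ENNReal.ofReal (ω x)) ^ (1 / p)

/-- Weighted L^p norm of a real-valued function. -/
def wNorm (p : ℝ) (ω f : Rn n → ℝ) : ℝ≥0∞ :=
  wNormE p ω fun x => ENNReal.ofReal |f x|

/-- Maximal commutator 𝓜^{(1)}_b. -/
def Mc1 (b f₁ f₂ : Rn n → ℝ) (x : Rn n) : ℝ≥0∞ :=
  ⨆ (c : Rn n) (r : ℝ) (_ : 0 < r) (_ : x ∈ Cube c r),
    (∫⁻ y₁ in Cube c r, ∫⁻ y₂ in Cube c r,
      ENNReal.ofReal |b x - b y₁| * (ENNReal.ofReal |f₁ y₁| * ENNReal.ofReal |f₂ y₂|)) /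
      volume (Cube c r) ^ 2

/-- Maximal commutator 𝓜^{(2)}_b. -/
def Mc2 (b f₁ f₂ : Rn n → ℝ) (x : Rn n) : ℝ≥0∞ :=
  ⨆ (c : Rn n) (r : ℝ) (_ : 0 < r) (_ : x ∈ Cube c r),
    (∫⁻ y₁ in Cube c r, ∫⁻ y₂ in Cube c r,
      ENNReal.ofReal |b x - b y₂| * (ENNReal.ofReal |f₁ y₁| * ENNReal.ofReal |f₂ y₂|)) /
      volume (Cube c r) ^ 2

/-- The maximal linear commutator 𝓜_{Σb⃗} for b⃗ = (b,b). -/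
def MSigma (b f₁ f₂ : Rn n → ℝ) (x : Rn n) : ℝ≥0∞ := Mc1 b f₁ f₂ x + Mc2 b f₁ f₂ x

/-- The maximal iterated commutator 𝓜_{Πb⃗} for b⃗ = (b,b). -/
def MPi (b f₁ f₂ : Rn n → ℝ) (x : Rn n) : ℝ≥0∞ :=
  ⨆ (c : Rn n) (r : ℝ) (_ : 0 < r) (_ : x ∈ Cube c r),
    (∫⁻ y₁ in Cube c r, ∫⁻ y₂ in Cube c r,
      ENNReal.ofReal |b x - b y₁| * ENNReal.ofReal |b x - b y₂| *
        (ENNReal.ofReal |f₁ y₁| * ENNReal.ofReal |f₂ y₂|)) /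
      volume (Cube c r) ^ 2

/-- The negative part b⁻ = -min{b,0}. -/
def bminus (b : Rn n → ℝ) (x : Rn n) : ℝ := max (-b x) 0

/-- The linear commutator [Σb⃗,𝓜] = [b,𝓜]^{(1)} + [b,𝓜]^{(2)}, b⃗ = (b,b). -/
def commSigma (b f₁ f₂ : Rn n → ℝ) (x : Rn n) : ℝ :=
  (b x * (biM f₁ f₂ x).toReal - (biM (fun y => b y * f₁ y) f₂ x).toReal) +
  (b x * (biM f₁ f₂ x).toReal - (biM f₁ (fun y => b y * f₂ y) x).toReal)

/-- The iterated commutator [Πb⃗,𝓜], b⃗ = (b,b). -/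
def commPi (b f₁ f₂ : Rn n → ℝ) (x : Rn n) : ℝ :=
  b x ^ 2 * (biM f₁ f₂ x).toReal - b x * (biM f₁ (fun y => b y * f₂ y) x).toReal
    - b x * (biM (fun y => b y * f₁ y) f₂ x).toReal
    + (biM (fun y => b y * f₁ y) (fun y => b y * f₂ y) x).toReal

/-- The weighted BMO^q(ω) norm. -/
def bmoNorm (q : ℝ) (ω b : Rn n → ℝ) : ℝ≥0∞ :=
  ⨆ (c : Rn n) (r : ℝ) (_ : 0 < r),
    ((∫⁻ y in Cube c r,
        ENNReal.ofReal |b y - cubeAvg b c r| ^ q * ENNReal.ofReal (ω y) ^ (1 - q)) /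
      wVol ω c r) ^ (1 / q)

/-- The Muckenhoupt class A₁. -/
def IsA1 (ω : Rn n → ℝ) : Prop :=
  Measurable ω ∧ (∀ x, 0 ≤ ω x) ∧ (∀ᵐ x ∂(volume : Measure (Rn n)), 0 < ω x) ∧
    LocallyIntegrable ω ∧
    ∃ C > (0 : ℝ), ∀ (c : Rn n) (r : ℝ), 0 < r →
      wVol ω c r / volume (Cube c r) ≤
        ENNReal.ofReal C * essInf (fun y => ENNReal.ofReal (ω y)) (volume.restrict (Cube c r))

/-- The Muckenhoupt class A_q, 1 < q < ∞. -/
def IsAq (q : ℝ) (ω : Rn n → ℝ) : Prop :=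
  Measurable ω ∧ (∀ x, 0 ≤ ω x) ∧ (∀ᵐ x ∂(volume : Measure (Rn n)), 0 < ω x) ∧
    LocallyIntegrable ω ∧
    ∃ C : ℝ, ∀ (c : Rn n) (r : ℝ), 0 < r →
      (wVol ω c r / volume (Cube c r)) *
        ((∫⁻ y in Cube c r, ENNReal.ofReal (ω y) ^ (-(1 / (q - 1)))) /
          volume (Cube c r)) ^ (q - 1) ≤ ENNReal.ofReal C

/-- A_∞ = ∪_{1 ≤ q < ∞} A_q. -/
def IsAinfty (ω : Rn n → ℝ) : Prop := IsA1 ω ∨ ∃ q > (1 : ℝ), IsAq q ω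

/-- The Fefferman–Stein sharp maximal function M^♯. -/
def sharpM (g : Rn n → ℝ) (x : Rn n) : ℝ≥0∞ :=
  ⨆ (c : Rn n) (r : ℝ) (_ : 0 < r) (_ : x ∈ Cube c r),
    (∫⁻ y in Cube c r, ENNReal.ofReal |g y - cubeAvg g c r|) / volume (Cube c r)

/-- M^♯_δ(g) = (M^♯(|g|^δ))^{1/δ}. -/
def sharpMd (δ : ℝ) (g : Rn n → ℝ) (x : Rn n) : ℝ≥0∞ :=
  sharpM (fun y => |g y| ^ δ) x ^ (1 / δ)

/-- The characteristic function of the cube Q = Cube c r. -/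
def chi (c : Rn n) (r : ℝ) : Rn n → ℝ := (Cube c r).indicator fun _ => 1

end

/-! Test the bound on `f₁ = f₂ = χ_Q`. For `x ∈ Q`, the average of `|b x - b y|` over `y ∈ Q`
dominates half the mean oscillation `⨍_Q |b - b_Q|`, and each of the two maximal commutators
dominates that average, so `𝓜_{Σb⃗}(χ_Q, χ_Q) ≥ ⨍_Q |b - b_Q|` on `Q`. Integrating against
`ω^{1-p}` over `Q` gives `(⨍_Q |b - b_Q|)^p ∫_Q ω^{1-p} ≤ K^p ω(Q)`. It remains to bound
`∫_Q ω^{1-p}` below by a multiple of `|Q|^p ω(Q)^{1-p}`: for `p ≥ 1` this is Hölder's inequality,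
for `p < 1` it follows from the `A₁` bound `ω ≥ ω(Q) / (C |Q|)` a.e. on `Q`. -/

section Oscillation

variable {α : Type*} [MeasurableSpace α] {μ : Measure α} [IsFiniteMeasure μ]

theorem integral_abs_sub_average_le {f : α → ℝ} (hf : Integrable f μ) (a : ℝ) :
    ∫ y, |f y - ⨍ z, f z ∂μ| ∂μ ≤ 2 * ∫ y, |a - f y| ∂μ := by
  have hdist : μ.real Set.univ * |a - ⨍ z, f z ∂μ| ≤ ∫ y, |a - f y| ∂μ := by
    have : μ.real Set.univ * (a - ⨍ z, f z ∂μ) = ∫ y, (a - f y) ∂μ := by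
      rw [integral_sub (integrable_const a) hf, integral_const, ← measure_smul_average μ f,
        smul_eq_mul, smul_eq_mul, mul_sub]
    rw [← abs_of_nonneg (measureReal_nonneg (μ := μ) (s := Set.univ)), ← abs_mul, this]
    exact abs_integral_le_integral_abs
  have hfa : Integrable (fun y => |a - f y|) μ := ((integrable_const a).sub hf).abs
  calc ∫ y, |f y - ⨍ z, f z ∂μ| ∂μ ≤ ∫ y, (|a - f y| + |a - ⨍ z, f z ∂μ|) ∂μ := by
        refine integral_mono (hf.sub (integrable_const _)).abs (hfa.add (integrable_const _))
          fun y => ?_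
        rw [abs_sub_comm a (f y)]
        exact abs_sub_le _ _ _
    _ = ∫ y, |a - f y| ∂μ + μ.real Set.univ * |a - ⨍ z, f z ∂μ| := by
        rw [integral_add hfa (integrable_const _), integral_const, smul_eq_mul]
    _ ≤ 2 * ∫ y, |a - f y| ∂μ := by linarith

end Oscillation

section Weights

variable {α : Type*} [MeasurableSpace α] {μ : Measure α} {s : Set α} {ω : α → ℝ}

theorem setLIntegral_ofReal_ne_zero (hω : AEMeasurable ω (μ.restrict s))
    (hpos : ∀ᵐ x ∂μ.restrict s, 0 < ω x) (hs : μ s ≠ 0) :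
    ∫⁻ x in s, ENNReal.ofReal (ω x) ∂μ ≠ 0 := by
  rw [Ne, lintegral_eq_zero_iff' hω.ennreal_ofReal]
  intro hzero
  have hfalse : ∀ᵐ x ∂μ.restrict s, False := by
    filter_upwards [hzero, hpos] with x hx hωx
    exact (ENNReal.ofReal_pos.mpr hωx).ne' hx
  exact hs (by simpa using ae_iff.mp hfalse)

theorem measure_rpow_mul_setLIntegral_rpow_le_of_le_one {p : ℝ} (hp : p ≤ 1)
    (hnn : ∀ x, 0 ≤ ω x) {C : ℝ≥0∞}
    (hC : (∫⁻ x in s, ENNReal.ofReal (ω x) ∂μ) / μ s ≤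
      C * essInf (fun x => ENNReal.ofReal (ω x)) (μ.restrict s))
    (hs0 : μ s ≠ 0) (hst : μ s ≠ ⊤) :
    μ s ^ p * (∫⁻ x in s, ENNReal.ofReal (ω x) ∂μ) ^ (1 - p) ≤
      C ^ (1 - p) * ∫⁻ x in s, ENNReal.ofReal (ω x ^ (1 - p)) ∂μ := by
  set W := ∫⁻ x in s, ENNReal.ofReal (ω x) ∂μ
  set m := essInf (fun x => ENNReal.ofReal (ω x)) (μ.restrict s)
  have hq : 0 ≤ 1 - p := by linarith
  have hm : m ^ (1 - p) * μ s ≤ ∫⁻ x in s, ENNReal.ofReal (ω x ^ (1 - p)) ∂μ := by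
    rw [← setLIntegral_const]
    refine lintegral_mono_ae ?_
    filter_upwards [ae_essInf_le (f := fun x => ENNReal.ofReal (ω x)) (μ := μ.restrict s)]
      with x hx
    rw [← ENNReal.ofReal_rpow_of_nonneg (hnn x) hq]
    exact ENNReal.rpow_le_rpow hx hq
  have hV : μ s ^ p = μ s ^ (1 : ℝ) / μ s ^ (1 - p) := by
    rw [← ENNReal.rpow_sub _ _ hs0 hst, sub_sub_self]
  calc μ s ^ p * W ^ (1 - p) = (W / μ s) ^ (1 - p) * μ s := by
        rw [hV, ENNReal.rpow_one, ENNReal.div_rpow_of_nonneg _ _ hq, div_eq_mul_inv, div_eq_mul_inv]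
        ring
    _ ≤ (C * m) ^ (1 - p) * μ s := by gcongr
    _ = C ^ (1 - p) * (m ^ (1 - p) * μ s) := by
        rw [ENNReal.mul_rpow_of_nonneg _ _ hq, mul_assoc]
    _ ≤ C ^ (1 - p) * ∫⁻ x in s, ENNReal.ofReal (ω x ^ (1 - p)) ∂μ := by gcongr

theorem measure_rpow_mul_setLIntegral_rpow_le_of_one_le {p : ℝ} (hp : 1 ≤ p)
    (hω : AEMeasurable ω (μ.restrict s)) (hpos : ∀ᵐ x ∂μ.restrict s, 0 < ω x)
    (hW0 : ∫⁻ x in s, ENNReal.ofReal (ω x) ∂μ ≠ 0)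
    (hWt : ∫⁻ x in s, ENNReal.ofReal (ω x) ∂μ ≠ ⊤) :
    μ s ^ p * (∫⁻ x in s, ENNReal.ofReal (ω x) ∂μ) ^ (1 - p) ≤
      ∫⁻ x in s, ENNReal.ofReal (ω x ^ (1 - p)) ∂μ := by
  set W := ∫⁻ x in s, ENNReal.ofReal (ω x) ∂μ
  set T := ∫⁻ x in s, ENNReal.ofReal (ω x ^ (1 - p)) ∂μ
  have hp0 : 0 < p := by linarith
  have hholder : μ s ≤ T ^ (1 / p) * W ^ (1 - 1 / p) := by
    calc μ s = ∫⁻ x in s, ENNReal.ofReal (ω x ^ (1 - p)) ^ (1 / p) *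
          ENNReal.ofReal (ω x) ^ (1 - 1 / p) ∂μ := by
          rw [← setLIntegral_one]
          refine lintegral_congr_ae ?_
          filter_upwards [hpos] with x hx
          rw [ENNReal.ofReal_rpow_of_pos (Real.rpow_pos_of_pos hx _),
            ENNReal.ofReal_rpow_of_pos hx, ← ENNReal.ofReal_mul (by positivity),
            ← Real.rpow_mul hx.le, ← Real.rpow_add hx,
            show (1 - p) * (1 / p) + (1 - 1 / p) = 0 by field_simp; ring,
            Real.rpow_zero, ENNReal.ofReal_one]
      _ ≤ T ^ (1 / p) * W ^ (1 - 1 / p) :=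
        ENNReal.lintegral_mul_norm_pow_le (hω.pow_const _).ennreal_ofReal hω.ennreal_ofReal
          (by positivity) (by rw [sub_nonneg]; exact div_le_one_of_le₀ hp hp0.le)
          (by ring)
  calc μ s ^ p * W ^ (1 - p) ≤ (T ^ (1 / p) * W ^ (1 - 1 / p)) ^ p * W ^ (1 - p) := by
        gcongr
    _ = T * (W ^ (p - 1) * W ^ (1 - p)) := by
        rw [ENNReal.mul_rpow_of_nonneg _ _ hp0.le, ← ENNReal.rpow_mul, ← ENNReal.rpow_mul,
          one_div_mul_cancel hp0.ne', ENNReal.rpow_one, sub_mul, one_mul,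
          one_div_mul_cancel hp0.ne', mul_assoc]
    _ = T := by
        rw [← ENNReal.rpow_add _ _ hW0 hWt, sub_add_sub_cancel', sub_self, ENNReal.rpow_zero,
          mul_one]

end Weights

theorem ENNReal.div_le_rpow_inv_mul_of_le_of_le {A V W T D K : ℝ≥0∞} {p : ℝ} (hp : 0 < p)
    (hV0 : V ≠ 0) (hVt : V ≠ ⊤) (hW0 : W ≠ 0) (hWt : W ≠ ⊤)
    (hA : (A / V) ^ p * T ≤ K ^ p * W) (hT : V ^ p * W ^ (1 - p) ≤ D * T) :
    A / W ≤ D ^ p⁻¹ * K := by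
  rw [← ENNReal.rpow_le_rpow_iff hp, ENNReal.mul_rpow_of_nonneg _ _ hp.le, ← ENNReal.rpow_mul,
    inv_mul_cancel₀ hp.ne', ENNReal.rpow_one, ← ENNReal.mul_le_mul_iff_left hW0 hWt]
  have hAV : (A / V) ^ p * V ^ p = A ^ p := by
    rw [← ENNReal.mul_rpow_of_nonneg _ _ hp.le, ENNReal.div_mul_cancel hV0 hVt]
  have hW : W ^ (1 - p) = W / W ^ p := by
    rw [ENNReal.rpow_sub _ _ hW0 hWt, ENNReal.rpow_one]
  calc (A / W) ^ p * W = (A / V) ^ p * (V ^ p * W ^ (1 - p)) := by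
        rw [← mul_assoc, hAV, hW, ENNReal.div_rpow_of_nonneg _ _ hp.le, div_eq_mul_inv,
          div_eq_mul_inv]
        ring
    _ ≤ (A / V) ^ p * (D * T) := by gcongr
    _ = D * ((A / V) ^ p * T) := by ring
    _ ≤ D * K ^ p * W := by
        rw [mul_assoc]
        gcongr

section Cube

variable {n : ℕ}

theorem measurableSet_cube (c : Rn n) (r : ℝ) : MeasurableSet (Cube c r) :=
  measurableSet_closedBall

theorem volume_cube_pos (c : Rn n) {r : ℝ} (hr : 0 < r) : 0 < volume (Cube c r) :=
  Metric.measure_closedBall_pos _ _ hr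

theorem volume_cube_ne_top (c : Rn n) (r : ℝ) : volume (Cube c r) ≠ ⊤ :=
  measure_closedBall_lt_top.ne

theorem wVol_ne_zero {ω : Rn n → ℝ} (hω : Measurable ω) (hpos : ∀ᵐ x, 0 < ω x) (c : Rn n)
    {r : ℝ} (hr : 0 < r) : wVol ω c r ≠ 0 :=
  setLIntegral_ofReal_ne_zero hω.aemeasurable (ae_restrict_of_ae hpos) (volume_cube_pos c hr).ne'

theorem wVol_ne_top {ω : Rn n → ℝ} (hω : LocallyIntegrable ω) (c : Rn n) (r : ℝ) :
    wVol ω c r ≠ ⊤ :=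
  (hω.integrableOn_isCompact (isCompact_closedBall c r)).lintegral_lt_top.ne

theorem IsA1.exists_volume_rpow_mul_wVol_rpow_le {ω : Rn n → ℝ} (hω : IsA1 ω) (p : ℝ) :
    ∃ D : ℝ≥0∞, D ≠ ⊤ ∧ ∀ (c : Rn n) (r : ℝ), 0 < r →
      volume (Cube c r) ^ p * wVol ω c r ^ (1 - p) ≤
        D * ∫⁻ y in Cube c r, ENNReal.ofReal (ω y ^ (1 - p)) := by
  obtain ⟨hmeas, hnn, hpos, hloc, C, -, hA1⟩ := hω
  rcases le_total p 1 with hp | hp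
  · refine ⟨ENNReal.ofReal C ^ (1 - p), by finiteness, fun c r hr => ?_⟩
    exact measure_rpow_mul_setLIntegral_rpow_le_of_le_one hp hnn (hA1 c r hr)
      (volume_cube_pos c hr).ne' (volume_cube_ne_top c r)
  · refine ⟨1, ENNReal.one_ne_top, fun c r hr => ?_⟩
    rw [one_mul]
    exact measure_rpow_mul_setLIntegral_rpow_le_of_one_le hp hmeas.aemeasurable
      (ae_restrict_of_ae hpos) (wVol_ne_zero hmeas hpos c hr) (wVol_ne_top hloc c r)

theorem cubeAvg_eq_setAverage (f : Rn n → ℝ) (c : Rn n) (r : ℝ) :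
    cubeAvg f c r = ⨍ y in Cube c r, f y := by
  rw [cubeAvg, setAverage_eq, smul_eq_mul, measureReal_def, div_eq_inv_mul]

theorem setLIntegral_abs_sub_cubeAvg_le {b : Rn n → ℝ} {c : Rn n} {r : ℝ}
    (hb : IntegrableOn b (Cube c r)) (x : Rn n) :
    ∫⁻ y in Cube c r, ENNReal.ofReal |b y - cubeAvg b c r| ≤
      2 * ∫⁻ y in Cube c r, ENNReal.ofReal |b x - b y| := by
  have : IsFiniteMeasure (volume.restrict (Cube c r)) :=
    isFiniteMeasure_restrict.mpr (volume_cube_ne_top c r)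
  have habs (f : Rn n → ℝ) (hf : IntegrableOn f (Cube c r)) :
      ∫⁻ y in Cube c r, ENNReal.ofReal |f y| = ENNReal.ofReal (∫ y in Cube c r, |f y|) :=
    (ofReal_integral_eq_lintegral_ofReal hf.abs (ae_of_all _ fun _ => abs_nonneg _)).symm
  rw [cubeAvg_eq_setAverage, habs (fun y => b y - _) (hb.sub (integrable_const _)),
    habs (fun y => b x - b y) ((integrable_const _).sub hb), ← ENNReal.ofReal_ofNat 2,
    ← ENNReal.ofReal_mul zero_le_two]
  exact ENNReal.ofReal_le_ofReal (integral_abs_sub_average_le hb (b x))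

theorem ofReal_abs_chi {c y : Rn n} {r : ℝ} (hy : y ∈ Cube c r) :
    ENNReal.ofReal |chi c r y| = 1 := by
  simp [chi, Set.indicator_of_mem hy]

theorem setLIntegral_abs_sub_div_le_Mc1 (b : Rn n → ℝ) {c x : Rn n} {r : ℝ} (hr : 0 < r)
    (hx : x ∈ Cube c r) :
    (∫⁻ y in Cube c r, ENNReal.ofReal |b x - b y|) / volume (Cube c r) ≤
      Mc1 b (chi c r) (chi c r) x := by
  refine le_iSup₂_of_le c r (le_iSup₂_of_le hr hx ?_)
  rw [setLIntegral_congr_fun (measurableSet_cube c r) (g := fun y₁ =>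
      ∫⁻ _ in Cube c r, ENNReal.ofReal |b x - b y₁|) fun y₁ hy₁ =>
    setLIntegral_congr_fun (measurableSet_cube c r) fun y₂ hy₂ => by
      rw [ofReal_abs_chi hy₁, ofReal_abs_chi hy₂, mul_one, mul_one]]
  simp only [setLIntegral_const]
  rw [lintegral_mul_const' _ _ (volume_cube_ne_top c r), sq,
    ENNReal.mul_div_mul_right _ _ (volume_cube_pos c hr).ne' (volume_cube_ne_top c r)]

theorem setLIntegral_abs_sub_div_le_Mc2 (b : Rn n → ℝ) {c x : Rn n} {r : ℝ} (hr : 0 < r)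
    (hx : x ∈ Cube c r) :
    (∫⁻ y in Cube c r, ENNReal.ofReal |b x - b y|) / volume (Cube c r) ≤
      Mc2 b (chi c r) (chi c r) x := by
  refine le_iSup₂_of_le c r (le_iSup₂_of_le hr hx ?_)
  rw [setLIntegral_congr_fun (measurableSet_cube c r) (g := fun _ =>
      ∫⁻ y₂ in Cube c r, ENNReal.ofReal |b x - b y₂|) fun y₁ hy₁ =>
    setLIntegral_congr_fun (measurableSet_cube c r) fun y₂ hy₂ => by
      rw [ofReal_abs_chi hy₁, ofReal_abs_chi hy₂, mul_one, mul_one]]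
  rw [setLIntegral_const, sq,
    ENNReal.mul_div_mul_right _ _ (volume_cube_pos c hr).ne' (volume_cube_ne_top c r)]

theorem setLIntegral_abs_sub_cubeAvg_div_le_MSigma {b : Rn n → ℝ} {c x : Rn n} {r : ℝ}
    (hb : IntegrableOn b (Cube c r)) (hr : 0 < r) (hx : x ∈ Cube c r) :
    (∫⁻ y in Cube c r, ENNReal.ofReal |b y - cubeAvg b c r|) / volume (Cube c r) ≤
      MSigma b (chi c r) (chi c r) x := by
  set I := ∫⁻ y in Cube c r, ENNReal.ofReal |b x - b y|
  calc _ ≤ 2 * I / volume (Cube c r) :=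
        ENNReal.div_le_div_right (setLIntegral_abs_sub_cubeAvg_le hb x) _
    _ = I / volume (Cube c r) + I / volume (Cube c r) := by rw [two_mul, ENNReal.add_div]
    _ ≤ MSigma b (chi c r) (chi c r) x :=
        add_le_add (setLIntegral_abs_sub_div_le_Mc1 b hr hx)
          (setLIntegral_abs_sub_div_le_Mc2 b hr hx)

theorem wNorm_chi (ω : Rn n → ℝ) {q : ℝ} (hq : 0 < q) (c : Rn n) (r : ℝ) :
    wNorm q ω (chi c r) = wVol ω c r ^ (1 / q) := by
  rw [wNorm, wNormE, wVol, ← lintegral_indicator (measurableSet_cube c r)]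
  congr 1
  refine lintegral_congr fun x => ?_
  by_cases hx : x ∈ Cube c r
  · simp [chi, Set.indicator_of_mem hx]
  · simp [chi, Set.indicator_of_notMem hx, ENNReal.zero_rpow_of_pos hq]

theorem lintegral_MSigma_chi_rpow_le {p₁ p₂ p : ℝ} (hp₁ : 0 < p₁) (hp₂ : 0 < p₂) (hp0 : 0 < p)
    (hp : 1 / p = 1 / p₁ + 1 / p₂) {ω b : Rn n → ℝ} {K : ℝ≥0} {c : Rn n} {r : ℝ}
    (hK : wNormE p (fun x => ω x ^ (1 - p)) (MSigma b (chi c r) (chi c r)) ≤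
      K * wNorm p₁ ω (chi c r) * wNorm p₂ ω (chi c r)) :
    ∫⁻ x, MSigma b (chi c r) (chi c r) x ^ p * ENNReal.ofReal (ω x ^ (1 - p)) ≤
      K ^ p * wVol ω c r := by
  rw [wNorm_chi ω hp₁, wNorm_chi ω hp₂, mul_assoc,
    ← ENNReal.rpow_add_of_nonneg _ _ (by positivity) (by positivity), ← hp, wNormE, one_div,
    ENNReal.rpow_inv_le_iff hp0, ENNReal.mul_rpow_of_nonneg _ _ hp0.le, ← ENNReal.rpow_mul,
    inv_mul_cancel₀ hp0.ne', ENNReal.rpow_one] at hK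
  exact hK

end Cube

/-- if 𝓜_{Σb⃗} is bounded L^{p₁}(ω) × L^{p₂}(ω) → L^p(ω^{1-p}) with
norm K, then b ∈ BMO(ω) with (1/ω(Q))∫_Q |b - b_Q| ≤ C·K for all cubes Q. -/
theorem stmt6 {n : ℕ} (p₁ p₂ p : ℝ) (hp₁ : 1 < p₁) (hp₂ : 1 < p₂)
    (hp : 1 / p = 1 / p₁ + 1 / p₂) (ω : Rn n → ℝ) (hω : IsA1 ω)
    (b : Rn n → ℝ) (hb : LocallyIntegrable b) (K : ℝ≥0)
    (hK : ∀ f₁ f₂ : Rn n → ℝ,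
      wNormE p (fun x => ω x ^ (1 - p)) (MSigma b f₁ f₂) ≤
        (K : ℝ≥0∞) * wNorm p₁ ω f₁ * wNorm p₂ ω f₂) :
    ∃ C : ℝ≥0, ∀ (c : Rn n) (r : ℝ), 0 < r →
      (∫⁻ y in Cube c r, ENNReal.ofReal |b y - cubeAvg b c r|) / wVol ω c r ≤
        (C : ℝ≥0∞) * K := by
  obtain ⟨D, hDt, hD⟩ := hω.exists_volume_rpow_mul_wVol_rpow_le p
  obtain ⟨hmeas, -, hpos, hloc, -⟩ := hω
  have hp0 : 0 < p := one_div_pos.mp (by rw [hp]; positivity)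
  refine ⟨(D ^ p⁻¹).toNNReal, fun c r hr => ?_⟩
  rw [ENNReal.coe_toNNReal (ENNReal.rpow_ne_top_of_nonneg (by positivity) hDt)]
  refine ENNReal.div_le_rpow_inv_mul_of_le_of_le hp0 (volume_cube_pos c hr).ne'
    (volume_cube_ne_top c r) (wVol_ne_zero hmeas hpos c hr) (wVol_ne_top hloc c r) ?_ (hD c r hr)
  have hbQ : IntegrableOn b (Cube c r) := hb.integrableOn_isCompact (isCompact_closedBall c r)
  calc _ = ∫⁻ x in Cube c r, ((∫⁻ y in Cube c r, ENNReal.ofReal |b y - cubeAvg b c r|) /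
        volume (Cube c r)) ^ p * ENNReal.ofReal (ω x ^ (1 - p)) :=
        (lintegral_const_mul _ (hmeas.pow_const _).ennreal_ofReal).symm
    _ ≤ ∫⁻ x in Cube c r, MSigma b (chi c r) (chi c r) x ^ p * ENNReal.ofReal (ω x ^ (1 - p)) :=
        setLIntegral_mono' (measurableSet_cube c r) fun x hx => by
          gcongr
          exact setLIntegral_abs_sub_cubeAvg_div_le_MSigma hbQ hr hx
    _ ≤ ∫⁻ x, MSigma b (chi c r) (chi c r) x ^ p * ENNReal.ofReal (ω x ^ (1 - p)) :=
        setLIntegral_le_lintegral _ _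
    _ ≤ K ^ p * wVol ω c r :=
        lintegral_MSigma_chi_rpow_le (by linarith) (by linarith) hp0 hp (hK _ _)
end

section
/- Let b be locally integrable and b⃗ = (b,b). For every x, the linear commutator of the bilinear maximal function satisfies the pointwise bound |[Σb⃗, 𝓜](f₁,f₂)(x)| ≤ C(𝓜_{Σb⃗}(f₁,f₂)(x) + b⁻(x)·𝓜(f₁,f₂)(x)), where b⁻(x) = -min{b(x),0}. -/
open MeasureTheory ENNReal NNReal

/-! In each slot, with `A = 𝓜(f₁,f₂)(x)` and `B = 𝓜(b f₁,f₂)(x)`, the pointwise inequality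
`||b(x)| |f₁(y)| - |b(y) f₁(y)|| ≤ |b(x) - b(y)| |f₁(y)|`, averaged over a cube containing `x` and
maximised over cubes, gives `||b(x)| A - B| ≤ 𝓜_b^{(1)}(f₁,f₂)(x)`. Since
`b(x) = |b(x)| - 2 b⁻(x)`, this yields `|b(x) A - B| ≤ 𝓜_b^{(1)}(f₁,f₂)(x) + 2 b⁻(x) A`, and the two
slots together give the bound with `C = 4`. -/

section Lintegral

variable {α : Type*} [MeasurableSpace α] {μ : Measure α}

theorem exists_aemeasurable_le_lintegral_mul_eq {u : α → ℝ≥0∞} (hu : AEMeasurable u μ)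
    (hu_top : ∀ y, u y ≠ ∞) (w : α → ℝ≥0∞) :
    ∃ s : α → ℝ≥0∞, AEMeasurable s μ ∧ s ≤ w ∧ ∫⁻ y, u y * w y ∂μ = ∫⁻ y, u y * s y ∂μ := by
  obtain ⟨g, hg, hgw, hg_eq⟩ := exists_measurable_le_lintegral_eq μ fun y => u y * w y
  refine ⟨fun y => g y / u y, hg.aemeasurable.div hu, fun y => ?_, hg_eq.trans ?_⟩
  · rcases eq_or_ne (u y) 0 with h0 | h0
    · have hg0 : g y = 0 := by simpa [h0] using hgw y
      simp [hg0]
    · exact ENNReal.div_le_of_le_mul' (hgw y)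
  · refine lintegral_congr fun y => ?_
    rcases eq_or_ne (u y) 0 with h0 | h0
    · simpa [h0] using hgw y
    · exact (ENNReal.mul_div_cancel h0 (hu_top y)).symm

/-- `w` need not be measurable: this is what allows arbitrary functions `fᵢ` in the theorem. -/
theorem lintegral_mul_le_add_of_le_add {u v₁ v₂ : α → ℝ≥0∞} (hu : AEMeasurable u μ)
    (hu_top : ∀ y, u y ≠ ∞) (hv₁ : AEMeasurable v₁ μ) (h : ∀ y, u y ≤ v₁ y + v₂ y)
    (w : α → ℝ≥0∞) :
    ∫⁻ y, u y * w y ∂μ ≤ ∫⁻ y, v₁ y * w y ∂μ + ∫⁻ y, v₂ y * w y ∂μ := by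
  obtain ⟨s, hs, hsw, hs_eq⟩ := exists_aemeasurable_le_lintegral_mul_eq hu hu_top w
  calc ∫⁻ y, u y * w y ∂μ = ∫⁻ y, u y * s y ∂μ := hs_eq
    _ ≤ ∫⁻ y, v₁ y * s y + v₂ y * s y ∂μ :=
      lintegral_mono fun y => by rw [← add_mul]; exact mul_le_mul_left (h y) _
    _ = ∫⁻ y, v₁ y * s y ∂μ + ∫⁻ y, v₂ y * s y ∂μ := lintegral_add_left' (hv₁.mul hs) _
    _ ≤ ∫⁻ y, v₁ y * w y ∂μ + ∫⁻ y, v₂ y * w y ∂μ := by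
      gcongr with y y <;> exact hsw y

theorem lintegral_mul_lintegral_le_lintegral_lintegral {β : Type*} [MeasurableSpace β]
    {ν : Measure β} (φ : α → ℝ≥0∞) (ψ : β → ℝ≥0∞) :
    (∫⁻ y₁, φ y₁ ∂μ) * ∫⁻ y₂, ψ y₂ ∂ν ≤ ∫⁻ y₁, ∫⁻ y₂, φ y₁ * ψ y₂ ∂ν ∂μ :=
  (lintegral_mul_const_le _ _).trans (lintegral_mono fun _ => lintegral_const_mul_le _ _)

end Lintegral

theorem ENNReal.ofReal_abs_le_add_ofReal_abs_sub (p q : ℝ) :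
    ENNReal.ofReal |p| ≤ ENNReal.ofReal |q| + ENNReal.ofReal |p - q| :=
  (ENNReal.ofReal_le_ofReal (by linarith [abs_sub_abs_le_abs_sub p q])).trans
    ENNReal.ofReal_add_le

theorem ENNReal.ofReal_abs_toReal_sub_le {s t M : ℝ≥0∞} (h₁ : s ≤ t + M) (h₂ : t ≤ s + M) :
    ENNReal.ofReal |s.toReal - t.toReal| ≤ M := by
  rcases eq_or_ne M ∞ with rfl | hM
  · exact le_top
  have hs : t = ∞ → s = ∞ := fun ht => by simpa [ht, hM] using h₂
  have ht : s = ∞ → t = ∞ := fun hs => by simpa [hs, hM] using h₁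
  rw [← ENNReal.ofReal_toReal hM]
  refine ENNReal.ofReal_le_ofReal (abs_sub_le_iff.2 ⟨?_, ?_⟩)
  · linarith [ENNReal.toReal_le_add' h₁ hs (by simp [hM])]
  · linarith [ENNReal.toReal_le_add' h₂ ht (by simp [hM])]

theorem ofReal_abs_mul_toReal_sub_le {a : ℝ} {A B M : ℝ≥0∞}
    (h₁ : ENNReal.ofReal |a| * A ≤ B + M) (h₂ : B ≤ ENNReal.ofReal |a| * A + M) :
    ENNReal.ofReal |a * A.toReal - B.toReal| ≤ M + 2 * (ENNReal.ofReal (max (-a) 0) * A) := by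
  have hM := ENNReal.ofReal_abs_toReal_sub_le h₁ h₂
  rw [ENNReal.toReal_mul, ENNReal.toReal_ofReal (abs_nonneg a)] at hM
  have hneg : 0 ≤ 2 * max (-a) 0 * A.toReal := by positivity
  have ha : a = |a| - 2 * max (-a) 0 := by
    rcases le_total 0 a with h | h
    · rw [abs_of_nonneg h, max_eq_right (neg_nonpos.2 h)]; ring
    · rw [abs_of_nonpos h, max_eq_left (neg_nonneg.2 h)]; ring
  have hreal : |a * A.toReal - B.toReal| ≤
      |(|a|) * A.toReal - B.toReal| + 2 * max (-a) 0 * A.toReal := by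
    calc |a * A.toReal - B.toReal|
        = |(|a| * A.toReal - B.toReal) - 2 * max (-a) 0 * A.toReal| := by
          congr 1; nth_rewrite 1 [ha]; ring
      _ ≤ _ := (abs_sub _ _).trans_eq (by rw [abs_of_nonneg hneg])
  calc ENNReal.ofReal |a * A.toReal - B.toReal|
      ≤ ENNReal.ofReal |(|a|) * A.toReal - B.toReal| +
          ENNReal.ofReal (2 * max (-a) 0 * A.toReal) :=
        (ENNReal.ofReal_le_ofReal hreal).trans ENNReal.ofReal_add_le
    _ ≤ M + 2 * (ENNReal.ofReal (max (-a) 0) * A) := by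
      gcongr
      rw [mul_assoc, ENNReal.ofReal_mul zero_le_two, ENNReal.ofReal_mul (le_max_right _ _),
        ENNReal.ofReal_ofNat]
      gcongr
      exact ENNReal.ofReal_toReal_le

section Cubes

variable {n : ℕ}

theorem biM_comm (f g : Rn n → ℝ) (x : Rn n) : biM f g x = biM g f x := by
  simp only [biM, mul_comm]

theorem cubeAvgE_mul_cubeAvgE_le (φ ψ : Rn n → ℝ≥0∞) (c : Rn n) (r : ℝ) :
    cubeAvgE φ c r * cubeAvgE ψ c r ≤
      (∫⁻ y₁ in Cube c r, ∫⁻ y₂ in Cube c r, φ y₁ * ψ y₂) / volume (Cube c r) ^ 2 := by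
  rw [cubeAvgE, cubeAvgE, div_eq_mul_inv, div_eq_mul_inv, div_eq_mul_inv, ENNReal.inv_pow,
    mul_mul_mul_comm, ← sq]
  gcongr
  exact lintegral_mul_lintegral_le_lintegral_lintegral φ ψ

variable (b : Rn n → ℝ) (f g : Rn n → ℝ) (x : Rn n) (c : Rn n) (r : ℝ)

theorem cubeAvgE_mul_cubeAvgE_le_Mc1 (hr : 0 < r) (hx : x ∈ Cube c r) :
    cubeAvgE (fun y => ENNReal.ofReal |b x - b y| * ENNReal.ofReal |f y|) c r *
      cubeAvgE (fun y => ENNReal.ofReal |g y|) c r ≤ Mc1 b f g x := by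
  refine le_iSup₂_of_le c r <| le_iSup₂_of_le hr hx <|
    (cubeAvgE_mul_cubeAvgE_le ..).trans_eq ?_
  simp only [mul_assoc]

theorem cubeAvgE_mul_cubeAvgE_le_Mc2 (hr : 0 < r) (hx : x ∈ Cube c r) :
    cubeAvgE (fun y => ENNReal.ofReal |b x - b y| * ENNReal.ofReal |f y|) c r *
      cubeAvgE (fun y => ENNReal.ofReal |g y|) c r ≤ Mc2 b g f x := by
  refine le_iSup₂_of_le c r <| le_iSup₂_of_le hr hx <| ?_
  rw [mul_comm]
  refine (cubeAvgE_mul_cubeAvgE_le ..).trans_eq ?_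
  simp only [mul_left_comm]

variable {b}

theorem cubeAvgE_abs_mul_le (hb : AEMeasurable b volume) :
    cubeAvgE (fun y => ENNReal.ofReal |b y * f y|) c r ≤
      ENNReal.ofReal |b x| * cubeAvgE (fun y => ENNReal.ofReal |f y|) c r +
        cubeAvgE (fun y => ENNReal.ofReal |b x - b y| * ENNReal.ofReal |f y|) c r := by
  simp only [cubeAvgE, abs_mul, ENNReal.ofReal_mul (abs_nonneg _)]
  rw [mul_div_assoc', ← ENNReal.add_div, ← lintegral_const_mul' _ _ ENNReal.ofReal_ne_top]
  gcongr ?_ / _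
  refine lintegral_mul_le_add_of_le_add (by fun_prop) (fun _ => ENNReal.ofReal_ne_top)
    aemeasurable_const (fun y => ?_) _
  simpa only [abs_sub_comm] using ENNReal.ofReal_abs_le_add_ofReal_abs_sub (b y) (b x)

theorem ofReal_abs_mul_cubeAvgE_le (hb : AEMeasurable b volume) :
    ENNReal.ofReal |b x| * cubeAvgE (fun y => ENNReal.ofReal |f y|) c r ≤
      cubeAvgE (fun y => ENNReal.ofReal |b y * f y|) c r +
        cubeAvgE (fun y => ENNReal.ofReal |b x - b y| * ENNReal.ofReal |f y|) c r := by
  simp only [cubeAvgE, abs_mul, ENNReal.ofReal_mul (abs_nonneg _)]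
  rw [mul_div_assoc', ← ENNReal.add_div, ← lintegral_const_mul' _ _ ENNReal.ofReal_ne_top]
  gcongr ?_ / _
  exact lintegral_mul_le_add_of_le_add aemeasurable_const (fun _ => ENNReal.ofReal_ne_top)
    (by fun_prop) (fun y => ENNReal.ofReal_abs_le_add_ofReal_abs_sub (b x) (b y)) _

theorem biM_mul_left_bounds (hb : AEMeasurable b volume) {M : ℝ≥0∞}
    (hM : ∀ c r, 0 < r → x ∈ Cube c r →
      cubeAvgE (fun y => ENNReal.ofReal |b x - b y| * ENNReal.ofReal |f y|) c r *
        cubeAvgE (fun y => ENNReal.ofReal |g y|) c r ≤ M) :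
    ENNReal.ofReal |b x| * biM f g x ≤ biM (fun y => b y * f y) g x + M ∧
      biM (fun y => b y * f y) g x ≤ ENNReal.ofReal |b x| * biM f g x + M := by
  constructor
  · simp only [biM, ENNReal.mul_iSup]
    refine iSup₂_le fun c r => iSup₂_le fun hr hx => ?_
    calc ENNReal.ofReal |b x| * (cubeAvgE (fun y => ENNReal.ofReal |f y|) c r *
          cubeAvgE (fun y => ENNReal.ofReal |g y|) c r)
        ≤ (cubeAvgE (fun y => ENNReal.ofReal |b y * f y|) c r +
            cubeAvgE (fun y => ENNReal.ofReal |b x - b y| * ENNReal.ofReal |f y|) c r) *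
          cubeAvgE (fun y => ENNReal.ofReal |g y|) c r := by
          rw [← mul_assoc]; gcongr; exact ofReal_abs_mul_cubeAvgE_le f x c r hb
      _ ≤ _ := by
          rw [add_mul]
          exact add_le_add (le_iSup₂_of_le c r <| le_iSup₂_of_le hr hx le_rfl) (hM c r hr hx)
  · simp only [biM, ENNReal.mul_iSup]
    refine iSup₂_le fun c r => iSup₂_le fun hr hx => ?_
    calc cubeAvgE (fun y => ENNReal.ofReal |b y * f y|) c r *
          cubeAvgE (fun y => ENNReal.ofReal |g y|) c r
        ≤ (ENNReal.ofReal |b x| * cubeAvgE (fun y => ENNReal.ofReal |f y|) c r +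
            cubeAvgE (fun y => ENNReal.ofReal |b x - b y| * ENNReal.ofReal |f y|) c r) *
          cubeAvgE (fun y => ENNReal.ofReal |g y|) c r := by
          gcongr; exact cubeAvgE_abs_mul_le f x c r hb
      _ ≤ _ := by
          rw [add_mul, mul_assoc]
          exact add_le_add (le_iSup₂_of_le c r <| le_iSup₂_of_le hr hx le_rfl) (hM c r hr hx)

end Cubes

/-- pointwise |[Σb⃗,𝓜](f₁,f₂)| ≤ C(𝓜_{Σb⃗}(f₁,f₂) + b⁻·𝓜(f₁,f₂)). -/
theorem stmt8 {n : ℕ} (b : Rn n → ℝ) (hb : LocallyIntegrable b) :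
    ∃ C : ℝ≥0, ∀ (f₁ f₂ : Rn n → ℝ) (x : Rn n),
      ENNReal.ofReal |commSigma b f₁ f₂ x| ≤
        (C : ℝ≥0∞) * (MSigma b f₁ f₂ x + ENNReal.ofReal (bminus b x) * biM f₁ f₂ x) := by
  refine ⟨4, fun f₁ f₂ x => ?_⟩
  have hbm : AEMeasurable b volume := hb.aestronglyMeasurable.aemeasurable
  obtain ⟨h₁, h₂⟩ := biM_mul_left_bounds f₁ f₂ x hbm (cubeAvgE_mul_cubeAvgE_le_Mc1 b f₁ f₂ x)
  obtain ⟨h₃, h₄⟩ := biM_mul_left_bounds f₂ f₁ x hbm (cubeAvgE_mul_cubeAvgE_le_Mc2 b f₂ f₁ x)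
  rw [biM_comm f₂, biM_comm _ f₁] at h₃ h₄
  set A := biM f₁ f₂ x
  set E := ENNReal.ofReal (bminus b x) * A
  calc ENNReal.ofReal |commSigma b f₁ f₂ x|
      ≤ ENNReal.ofReal |b x * A.toReal - (biM (fun y => b y * f₁ y) f₂ x).toReal| +
          ENNReal.ofReal |b x * A.toReal - (biM f₁ (fun y => b y * f₂ y) x).toReal| :=
        (ENNReal.ofReal_le_ofReal (abs_add_le _ _)).trans ENNReal.ofReal_add_le
    _ ≤ (Mc1 b f₁ f₂ x + 2 * E) + (Mc2 b f₁ f₂ x + 2 * E) :=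
        add_le_add (ofReal_abs_mul_toReal_sub_le h₁ h₂) (ofReal_abs_mul_toReal_sub_le h₃ h₄)
    _ = MSigma b f₁ f₂ x + 4 * E := by rw [MSigma]; ring
    _ ≤ 4 * MSigma b f₁ f₂ x + 4 * E := by gcongr; exact le_mul_of_one_le_left' (by norm_num)
    _ = ((4 : ℝ≥0) : ℝ≥0∞) * (MSigma b f₁ f₂ x + E) := by push_cast; ring
end

section
/- Let φ: [0,∞) → [0,∞) be smooth with |φ′(t)| ≤ C/t, supported in [0,2], and φ_ε(t) = ε^{-2n}φ(t/ε). Then for z, z′, y₁, y₂ ∈ ℝⁿ with |z − z′| ≤ (1/2)·max{|z−y₁|, |z−y₂|}, one has |φ_ε(|z−y₁|+|z−y₂|) − φ_ε(|z′−y₁|+|z′−y₂|)| ≤ C·|z−z′| / (|z−y₁|+|z−y₂|)^{2n+1}. -/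
open MeasureTheory ENNReal NNReal

lemma mvt_aux' (φ : ℝ → ℝ) (hφ : ContDiff ℝ (⊤ : ℕ∞) φ) (C : ℝ) (hC : 0 ≤ C)
    (hderiv : ∀ t : ℝ, 0 < t → |deriv φ t| ≤ C / t)
    {m a b : ℝ} (hm : 0 < m) (ha : m ≤ a) (hb : m ≤ b) :
    |φ a - φ b| ≤ C / m * |a - b| := by
  wlog hab : a ≤ b generalizing a b
  · rw [abs_sub_comm, abs_sub_comm a b]; exact this hb ha (le_of_not_ge hab)
  rcases eq_or_lt_of_le hab with rfl | hlt
  · simp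
  obtain ⟨ξ, hξ, hder⟩ := exists_deriv_eq_slope φ hlt hφ.continuous.continuousOn
    (hφ.differentiable (by simp)).differentiableOn
  have hξpos : 0 < ξ := hm.trans (lt_of_le_of_lt ha hξ.1)
  have h1 : |deriv φ ξ| ≤ C / ξ := hderiv ξ hξpos
  have h2 : C / ξ ≤ C / m := by gcongr; exact (ha.trans hξ.1.le)
  have hba : b - a ≠ 0 := sub_ne_zero.2 hlt.ne'
  have heq : φ a - φ b = -(deriv φ ξ * (b - a)) := by rw [hder]; field_simp; ring
  rw [heq, abs_neg, abs_mul, abs_sub_comm]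
  exact mul_le_mul_of_nonneg_right (h1.trans h2) (abs_nonneg _)

set_option maxHeartbeats 1600000

/-- Hörmander-type smoothness estimate for the kernel φ_ε. -/
theorem stmt17 {n : ℕ} (φ : ℝ → ℝ) (hφ : ContDiff ℝ (⊤ : ℕ∞) φ) (C : ℝ)
    (hderiv : ∀ t : ℝ, 0 < t → |deriv φ t| ≤ C / t)
    (hsupp : ∀ t : ℝ, 2 < t → φ t = 0) :
    ∃ C' : ℝ≥0, ∀ ε : ℝ, 0 < ε → ∀ z z' y₁ y₂ : Rn n,
      ‖z - z'‖ ≤ (1 / 2) * max ‖z - y₁‖ ‖z - y₂‖ →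
      |ε ^ (-(2 * n : ℝ)) * φ ((‖z - y₁‖ + ‖z - y₂‖) / ε) -
          ε ^ (-(2 * n : ℝ)) * φ ((‖z' - y₁‖ + ‖z' - y₂‖) / ε)| ≤
        (C' : ℝ) * ‖z - z'‖ / (‖z - y₁‖ + ‖z - y₂‖) ^ (2 * n + 1) := by
  have hC : 0 ≤ C := (abs_nonneg _).trans (by simpa using hderiv 1 one_pos)
  refine ⟨Real.toNNReal (8 ^ (2 * n + 1) * C), ?_⟩
  intro ε hε z z' y₁ y₂ hzz
  rw [Real.coe_toNNReal _ (by positivity)]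
  set D := ‖z - y₁‖ + ‖z - y₂‖ with hDdef
  set D' := ‖z' - y₁‖ + ‖z' - y₂‖ with hD'def
  have hD0 : 0 ≤ D := by positivity
  have hm1 := le_max_left ‖z - y₁‖ ‖z - y₂‖
  have hm2 := le_max_right ‖z - y₁‖ ‖z - y₂‖
  have hn1 : (0:ℝ) ≤ ‖z - y₁‖ := norm_nonneg _
  have hn2 : (0:ℝ) ≤ ‖z - y₂‖ := norm_nonneg _
  have hn1' : (0:ℝ) ≤ ‖z' - y₁‖ := norm_nonneg _
  have hn2' : (0:ℝ) ≤ ‖z' - y₂‖ := norm_nonneg _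
  have hMle : max ‖z - y₁‖ ‖z - y₂‖ ≤ D := by
    rcases max_cases ‖z - y₁‖ ‖z - y₂‖ with ⟨h, _⟩ | ⟨h, _⟩ <;> rw [h] <;> unfold D <;> linarith
  have hDM : D ≤ 2 * max ‖z - y₁‖ ‖z - y₂‖ := by unfold D; linarith
  have hsub1 : ‖z - y₁‖ - ‖z - z'‖ ≤ ‖z' - y₁‖ := by
    have h := norm_sub_norm_le (z - y₁) (z - z')
    rwa [show (z - y₁) - (z - z') = z' - y₁ by abel] at h
  have hsub2 : ‖z - y₂‖ - ‖z - z'‖ ≤ ‖z' - y₂‖ := by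
    have h := norm_sub_norm_le (z - y₂) (z - z')
    rwa [show (z - y₂) - (z - z') = z' - y₂ by abel] at h
  have hD'4 : D / 4 ≤ D' := by
    rcases max_cases ‖z - y₁‖ ‖z - y₂‖ with ⟨h, _⟩ | ⟨h, _⟩ <;> rw [h] at hzz hDM <;>
      unfold D D' <;> linarith
  have habs1 : |‖z - y₁‖ - ‖z' - y₁‖| ≤ ‖z - z'‖ := by
    have h := abs_norm_sub_norm_le (z - y₁) (z' - y₁)
    rwa [show (z - y₁) - (z' - y₁) = z - z' by abel] at h
  have habs2 : |‖z - y₂‖ - ‖z' - y₂‖| ≤ ‖z - z'‖ := by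
    have h := abs_norm_sub_norm_le (z - y₂) (z' - y₂)
    rwa [show (z - y₂) - (z' - y₂) = z - z' by abel] at h
  have hDD' : |D - D'| ≤ 2 * ‖z - z'‖ := by
    rw [abs_le] at habs1 habs2 ⊢
    constructor <;> unfold D D' <;> [linarith [habs1.1, habs2.1]; linarith [habs1.2, habs2.2]]
  rcases eq_or_lt_of_le hD0 with hD | hD
  · have hzz0 : ‖z - z'‖ = 0 := le_antisymm (by linarith [hzz, hMle]) (norm_nonneg _)
    obtain rfl : z = z' := sub_eq_zero.1 (norm_eq_zero.1 hzz0)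
    simp [hDdef, hD'def]
  have hPε : ε ^ (-(2 * (n:ℝ))) = (ε ^ (2 * n))⁻¹ := by
    rw [show (2 * (n:ℝ)) = ((2 * n : ℕ) : ℝ) by push_cast; ring,
      Real.rpow_neg hε.le, Real.rpow_natCast]
  by_cases hbig : 2 < D / ε ∧ 2 < D' / ε
  · rw [hsupp _ hbig.1, hsupp _ hbig.2]
    simp only [mul_zero, sub_zero, abs_zero]
    positivity
  push_neg at hbig
  have hε8 : D ≤ 8 * ε := by
    by_cases h1 : 2 < D / ε
    · have h2 := hbig h1
      rw [div_le_iff₀ hε] at h2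
      linarith [hD'4]
    · push_neg at h1
      rw [div_le_iff₀ hε] at h1
      linarith
  have hDε : 0 < D / (4 * ε) := by positivity
  have hkey : |φ (D / ε) - φ (D' / ε)| ≤ C / (D / (4 * ε)) * |D / ε - D' / ε| := by
    refine mvt_aux' φ hφ C hC hderiv hDε ?_ ?_
    · rw [div_le_div_iff₀ (by positivity) hε]; nlinarith
    · rw [div_le_div_iff₀ (by positivity) hε]; nlinarith [hD'4]
  have hstep1 : C / (D / (4 * ε)) * |D / ε - D' / ε| ≤ 8 * C * ‖z - z'‖ / D := by
    have e1 : C / (D / (4 * ε)) = 4 * ε * C / D := by field_simp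
    have e2 : |D / ε - D' / ε| ≤ 2 * ‖z - z'‖ / ε := by
      rw [div_sub_div_same, abs_div, abs_of_pos hε]
      gcongr
    calc C / (D / (4 * ε)) * |D / ε - D' / ε|
        ≤ (4 * ε * C / D) * (2 * ‖z - z'‖ / ε) := by
          rw [e1]; exact mul_le_mul_of_nonneg_left e2 (by positivity)
      _ = 8 * C * ‖z - z'‖ / D := by field_simp; ring
  have habsP : |ε ^ (-(2 * (n:ℝ))) * φ (D / ε) - ε ^ (-(2 * (n:ℝ))) * φ (D' / ε)|
      = (ε ^ (2 * n))⁻¹ * |φ (D / ε) - φ (D' / ε)| := by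
    rw [← mul_sub, abs_mul, hPε, abs_of_pos (by positivity)]
  rw [habsP]
  have hinv : (ε ^ (2 * n))⁻¹ ≤ 8 ^ (2 * n) / D ^ (2 * n) := by
    rw [inv_eq_one_div, div_le_div_iff₀ (by positivity) (by positivity)]
    have h8 : D ^ (2 * n) ≤ (8 * ε) ^ (2 * n) := pow_le_pow_left₀ hD0 hε8 _
    rw [mul_pow] at h8
    linarith
  calc (ε ^ (2 * n))⁻¹ * |φ (D / ε) - φ (D' / ε)|
      ≤ (8 ^ (2 * n) / D ^ (2 * n)) * (8 * C * ‖z - z'‖ / D) := by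
        exact mul_le_mul hinv (hkey.trans hstep1) (abs_nonneg _) (by positivity)
    _ = 8 ^ (2 * n + 1) * C * ‖z - z'‖ / D ^ (2 * n + 1) := by
        rw [pow_succ, pow_succ]; field_simp
end
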